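/- arXiv:0710.2080 — 4 statements merged into one kernel-verified Lean document; each statement's English description precedes it below -/
import Mathlib

section
/- Let (V, ⟨·,·⟩, A) be a model with Ricci operator ρ and Jacobi operators 𝒥(v). Then 𝒥(v) ∘ ρ = ρ ∘ 𝒥(v) for all v ∈ V if and only if A(ρv₁, v₂, v₃, v₄) = A(v₁, ρv₂, v₃, v₄) = A(v₁, v₂, ρv₃, v₄) = A(v₁, v₂, v₃, ρv₄) for all v₁, v₂, v₃, v₄ ∈ V. -/
open TensorProduct

/-- `f : W⁴ → ℝ` is multilinear over `ℝ` in each of its four slots. -/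
def IsML {W : Type*} [AddCommGroup W] [Module ℝ W] (f : W → W → W → W → ℝ) : Prop :=
  (∀ x x' y z w, f (x + x') y z w = f x y z w + f x' y z w) ∧
  (∀ (c : ℝ) x y z w, f (c • x) y z w = c * f x y z w) ∧
  (∀ x y y' z w, f x (y + y') z w = f x y z w + f x y' z w) ∧
  (∀ (c : ℝ) x y z w, f x (c • y) z w = c * f x y z w) ∧
  (∀ x y z z' w, f x y (z + z') w = f x y z w + f x y z' w) ∧
  (∀ (c : ℝ) x y z w, f x y (c • z) w = c * f x y z w) ∧
  (∀ x y z w w', f x y z (w + w') = f x y z w + f x y z w') ∧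
  (∀ (c : ℝ) x y z w, f x y z (c • w) = c * f x y z w)

/-- The symmetries of the Riemann curvature tensor. -/
def IsCurvSym {W : Type*} [AddCommGroup W] [Module ℝ W] (f : W → W → W → W → ℝ) : Prop :=
  (∀ x y z w, f x y z w = - f y x z w) ∧
  (∀ x y z w, f x y z w = f z w x y) ∧
  (∀ x y z w, f x y z w + f y z x w + f z x y w = 0)

/-- An algebraic curvature tensor: a multilinear map with the curvature symmetries. -/
def IsACT {W : Type*} [AddCommGroup W] [Module ℝ W] (f : W → W → W → W → ℝ) : Prop :=
  IsML f ∧ IsCurvSym f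

/-- The defining value of `⟨ρ x, y⟩`: the trace of `z ↦ ½𝓡(z,x)y + ½𝓡(z,y)x`,
where `R` is the (curried) curvature operator. -/
noncomputable def ricciForm {V : Type*} [AddCommGroup V] [Module ℝ V]
    (R : V →ₗ[ℝ] V →ₗ[ℝ] V →ₗ[ℝ] V) (x y : V) : ℝ :=
  LinearMap.trace ℝ V
    (((1 : ℝ) / 2) • ((R.flip x).flip y) + ((1 : ℝ) / 2) • ((R.flip y).flip x))

/-- The Jacobi--Ricci commuting identity of Lemma 1 (3). -/
def JRComm {V : Type*} [AddCommGroup V] [Module ℝ V]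
    (A : V → V → V → V → ℝ) (ρ : V →ₗ[ℝ] V) : Prop :=
  ∀ v₁ v₂ v₃ v₄ : V,
    A (ρ v₁) v₂ v₃ v₄ = A v₁ (ρ v₂) v₃ v₄ ∧
    A v₁ (ρ v₂) v₃ v₄ = A v₁ v₂ (ρ v₃) v₄ ∧
    A v₁ v₂ (ρ v₃) v₄ = A v₁ v₂ v₃ (ρ v₄)

/-- Purely algebraic key lemma: curvature symmetries plus the polarized
Jacobi–Ricci commuting hypothesis imply full Ricci–curvature commuting. -/
lemma key_comm {V : Type*} [AddCommGroup V] [Module ℝ V]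
    (A : V → V → V → V → ℝ) (g : V → V)
    (h12 : ∀ a b c d, A a b c d = - A b a c d)
    (hpr : ∀ a b c d, A a b c d = A c d a b)
    (hB : ∀ a b c d, A a b c d + A b c a d + A c a b d = 0)
    (hH : ∀ a b c d, A (g a) b c d + A (g a) c b d = A a b c (g d) + A a c b (g d)) :
    ∀ x y z w : V, A (g x) y z w = A x (g y) z w ∧
      A x (g y) z w = A x y (g z) w ∧ A x y (g z) w = A x y z (g w) := by
  have h34 : ∀ a b c d : V, A a b c d = - A a b d c := fun a b c d => by
    rw [hpr a b c d, h12 c d a b, hpr d c a b]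
  intro x y z w
  refine ⟨?_, ?_, ?_⟩
  · linarith [h34 (g x) y z w, h12 x (g y) z w, h34 x (g y) z w, hB x (g y) z w, h12 x y (g z) w, h34 x y (g z) w, hB x y z (g w), hB (g x) y w z, h12 x (g y) w z, h12 x y w (g z), hB x y w (g z), hpr (g x) z y w, h12 x (g z) y w, hpr x (g z) y w, hB x (g z) y w, h12 x z (g y) w, hpr x z (g y) w, hB x z y (g w), h12 (g x) w y z, h12 x w y (g z), hH x y z w, hH x y w z, hH y x z w, hH y x w z, hH z x y w]
  · linarith [h34 (g x) y z w, h12 x (g y) z w, h34 x (g y) z w, hB x (g y) z w, h12 x y (g z) w, h34 x y (g z) w, hB x y z (g w), h12 x (g y) w z, hB x (g y) w z, h12 x y w (g z), hB x y w (g z), h34 (g x) z y w, h12 x (g z) y w, hpr x (g z) y w, hB x (g z) y w, h12 x z (g y) w, h34 x z (g y) w, hpr x z (g y) w, hB x z y (g w), h34 (g x) w y z, h12 x w (g y) z, h34 x w (g y) z, h12 x w y (g z), hH x y z w, hH x y w z, hH x z w y, hH y x z w, hH y x w z, hH z x y w]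
  · linarith [h34 (g x) y z w, h12 x (g y) z w, h34 x (g y) z w, hB x (g y) z w, h34 x y (g z) w, h12 x y z (g w), hB x y z (g w), h12 x (g y) w z, hB x (g y) w z, h12 x y w (g z), hB x y w (g z), h34 (g x) z y w, h12 x z (g y) w, h34 x z (g y) w, h12 x z y (g w), h34 (g x) w y z, h12 x w (g y) z, h34 x w (g y) z, h12 x w y (g z), hH x y z w, hH x y w z, hH x z w y, hH y x z w, hH y x w z]

theorem statement0
    {V : Type*} [AddCommGroup V] [Module ℝ V] [FiniteDimensional ℝ V]
    (B : LinearMap.BilinForm ℝ V)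
    (hBsymm : ∀ x y, B x y = B y x)
    (hBnondeg : ∀ x, (∀ y, B x y = 0) → x = 0)
    (A : V → V → V → V → ℝ) (hA : IsACT A)
    (R : V →ₗ[ℝ] V →ₗ[ℝ] V →ₗ[ℝ] V)
    (hR : ∀ x y z w, B (R x y z) w = A x y z w)
    (ρ : V →ₗ[ℝ] V)
    (hρ : ∀ x y, B (ρ x) y = ricciForm R x y)
    (Jac : V → V →ₗ[ℝ] V)
    (hJac : ∀ x y z, B (Jac x y) z = A y x x z) :
    (∀ v : V, Jac v ∘ₗ ρ = ρ ∘ₗ Jac v) ↔ JRComm A ρ := by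
  obtain ⟨hML, h12, hpr, hB⟩ := hA
  -- symmetry of the Ricci form, hence self-adjointness of ρ
  have hρsa : ∀ x y : V, B (ρ x) y = B x (ρ y) := by
    intro x y
    have h1 : ricciForm R x y = ricciForm R y x := by
      unfold ricciForm; rw [add_comm]
    rw [hρ x y, h1, ← hρ y x, hBsymm]
  have hBinj : ∀ u v : V, (∀ z, B u z = B v z) → u = v := by
    intro u v h
    have : u - v = 0 := hBnondeg _ (fun z => by
      rw [map_sub, LinearMap.sub_apply, h z, sub_self])
    exact sub_eq_zero.mp this
  constructor
  · intro h
    -- base identity from commuting Jacobi operators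
    have base : ∀ y v z : V, A (ρ y) v v z = A y v v (ρ z) := by
      intro y v z
      have h1 : Jac v (ρ y) = ρ (Jac v y) := congrArg (fun f => f y) (congrArg DFunLike.coe (h v))
      calc A (ρ y) v v z = B (Jac v (ρ y)) z := (hJac v (ρ y) z).symm
        _ = B (ρ (Jac v y)) z := by rw [h1]
        _ = B (Jac v y) (ρ z) := hρsa _ _
        _ = A y v v (ρ z) := hJac v y (ρ z)
    -- polarize in v
    have hH : ∀ a b c d : V, A (ρ a) b c d + A (ρ a) c b d
        = A a b c (ρ d) + A a c b (ρ d) := by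
      intro a b c d
      have e1 := base a (b + c) d
      have e2 := base a b d
      have e3 := base a c d
      obtain ⟨-, -, m2a, -, m3a, -, -, -⟩ := hML
      rw [m2a (ρ a), m3a (ρ a) b, m3a (ρ a) c, m2a a, m3a a b, m3a a c] at e1
      linarith
    intro v₁ v₂ v₃ v₄
    exact key_comm A ρ h12 hpr hB hH v₁ v₂ v₃ v₄
  · intro hJR v
    apply LinearMap.ext
    intro y
    apply hBinj
    intro z
    have l1 : B ((Jac v ∘ₗ ρ) y) z = A (ρ y) v v z := hJac v (ρ y) z
    have l2 : B ((ρ ∘ₗ Jac v) y) z = A y v v (ρ z) := by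
      show B (ρ (Jac v y)) z = _
      rw [hρsa, hJac]
    rw [l1, l2]
    obtain ⟨a1, a2, a3⟩ := hJR y v v z
    rw [a1, a2, a3]
end

section
/- Let (V, ⟨·,·⟩, A) be a model with Ricci operator ρ and curvature operators 𝓡(v₁,v₂). Then 𝓡(v₁,v₂) ∘ ρ = ρ ∘ 𝓡(v₁,v₂) for all v₁, v₂ ∈ V if and only if A(ρv₁, v₂, v₃, v₄) = A(v₁, ρv₂, v₃, v₄) = A(v₁, v₂, ρv₃, v₄) = A(v₁, v₂, v₃, ρv₄) for all v₁, v₂, v₃, v₄ ∈ V. -/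
open TensorProduct

theorem statement1
    {V : Type*} [AddCommGroup V] [Module ℝ V] [FiniteDimensional ℝ V]
    (B : LinearMap.BilinForm ℝ V)
    (hBsymm : ∀ x y, B x y = B y x)
    (hBnondeg : ∀ x, (∀ y, B x y = 0) → x = 0)
    (A : V → V → V → V → ℝ) (hA : IsACT A)
    (R : V →ₗ[ℝ] V →ₗ[ℝ] V →ₗ[ℝ] V)
    (hR : ∀ x y z w, B (R x y z) w = A x y z w)
    (ρ : V →ₗ[ℝ] V)
    (hρ : ∀ x y, B (ρ x) y = ricciForm R x y) :
    (∀ v₁ v₂ : V, R v₁ v₂ ∘ₗ ρ = ρ ∘ₗ R v₁ v₂) ↔ JRComm A ρ := by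
  obtain ⟨hml, hanti, hpair, hbianchi⟩ := hA
  have hρsym : ∀ x y, B (ρ x) y = B x (ρ y) := by
    intro x y
    have h1 : ricciForm R x y = ricciForm R y x := by
      unfold ricciForm; rw [add_comm]
    rw [hρ, h1, ← hρ, hBsymm]
  constructor
  · intro hc
    have H34 : ∀ v₁ v₂ v₃ v₄, A v₁ v₂ (ρ v₃) v₄ = A v₁ v₂ v₃ (ρ v₄) := by
      intro v₁ v₂ v₃ v₄
      have h := LinearMap.congr_fun (hc v₁ v₂) v₃
      simp only [LinearMap.comp_apply] at h
      calc A v₁ v₂ (ρ v₃) v₄ = B (R v₁ v₂ (ρ v₃)) v₄ := (hR _ _ _ _).symm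
        _ = B (ρ (R v₁ v₂ v₃)) v₄ := by rw [h]
        _ = B (R v₁ v₂ v₃) (ρ v₄) := hρsym _ _
        _ = A v₁ v₂ v₃ (ρ v₄) := hR _ _ _ _
    have H12 : ∀ v₁ v₂ v₃ v₄, A (ρ v₁) v₂ v₃ v₄ = A v₁ (ρ v₂) v₃ v₄ := by
      intro v₁ v₂ v₃ v₄
      rw [hpair (ρ v₁) v₂ v₃ v₄]
      rw [H34 v₃ v₄ v₁ v₂]
      rw [← hpair]
    have star : ∀ x y z w, (A (ρ x) y z w - A (ρ z) w x y)
        = -(A (ρ x) w y z - A (ρ y) z x w) := by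
      intro x y z w
      have P := hbianchi (ρ x) y z w
      have S := hbianchi x y (ρ z) w
      rw [hpair y z (ρ x) w, ← H12 z x y w] at P
      rw [hpair x y (ρ z) w, ← H12 y z x w] at S
      linarith
    have hD : ∀ x y z w, A (ρ x) y z w = A (ρ z) w x y := by
      intro x y z w
      have h1 := star x y z w
      have h2 := star x w y z
      have h3 := star x z w y
      linarith
    intro v₁ v₂ v₃ v₄
    refine ⟨H12 v₁ v₂ v₃ v₄, ?_, H34 v₁ v₂ v₃ v₄⟩
    rw [← H12 v₁ v₂ v₃ v₄, hD v₁ v₂ v₃ v₄, ← hpair]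
  · intro hJ v₁ v₂
    apply LinearMap.ext
    intro z
    simp only [LinearMap.comp_apply]
    have key : ∀ w, B (R v₁ v₂ (ρ z) - ρ (R v₁ v₂ z)) w = 0 := by
      intro w
      rw [map_sub, LinearMap.sub_apply, hR, hρsym, hR]
      have := (hJ v₁ v₂ z w).2.2
      linarith
    have h0 := hBnondeg _ key
    exact sub_eq_zero.mp h0
end

section
/- Let (V, ⟨·,·⟩, A) be an indecomposable Jacobi–Ricci commuting model with Ricci operator ρ. Then either there exists a₁ ∈ ℝ such that the spectrum of the complexification of ρ acting on V ⊗ ℂ equals {a₁}, or there exist a₁ ∈ ℝ and a₂ > 0 such that this spectrum equals {a₁ + a₂·i, a₁ − a₂·i}. -/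
open TensorProduct

/-- A model is decomposable if it splits as an orthogonal direct sum of two nontrivial
pieces on which the curvature tensor decouples. -/
def Decomposable {V : Type*} [AddCommGroup V] [Module ℝ V]
    (B : LinearMap.BilinForm ℝ V) (A : V → V → V → V → ℝ) : Prop :=
  ∃ V₁ V₂ : Submodule ℝ V, V₁ ≠ ⊥ ∧ V₂ ≠ ⊥ ∧ IsCompl V₁ V₂ ∧
    (∀ x ∈ V₁, ∀ y ∈ V₂, B x y = 0) ∧
    (∀ (v : Fin 4 → V) (i j : Fin 4), i ≠ j → v i ∈ V₁ → v j ∈ V₂ →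
      A (v 0) (v 1) (v 2) (v 3) = 0)

/-!
The Ricci operator is self-adjoint for `B`, since the Ricci form is symmetric, and the
Jacobi–Ricci identity lets `ρ`, hence every polynomial in `ρ`, move freely between the slots
of `A`. If the minimal polynomial of `ρ` were a product `f * g` of coprime factors with
`ker f(ρ)` and `ker g(ρ)` both nonzero, these kernels would decompose the model: `ker g(ρ)`
lies in the range of `f(ρ)`, and moving `f(ρ)` onto a vector of `ker f(ρ)` kills every value
of `B` and `A` that mixes the two pieces. So the minimal polynomial is, up to a unit, a power
of one irreducible real polynomial, whose complex roots (the spectrum of the complexified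
`ρ`) are either one real number or a pair of complex conjugates.
-/

open Polynomial Function

namespace MultilinearMap

variable {R ι V N : Type*} [CommSemiring R] [DecidableEq ι] [AddCommMonoid V] [Module R V]
  [AddCommMonoid N] [Module R N]

def SlotInvariant (M : MultilinearMap R (fun _ : ι => V) N) (T : Module.End R V) : Prop :=
  ∀ v i j, M (update v i (T (v i))) = M (update v j (T (v j)))

variable {M : MultilinearMap R (fun _ : ι => V) N} {T S : Module.End R V}

theorem slotInvariant_algebraMap (a : R) : M.SlotInvariant (algebraMap R (Module.End R V) a) := by
  intro v i j
  simp only [Module.algebraMap_end_apply, M.map_update_smul, update_eq_self]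

theorem SlotInvariant.add (hT : M.SlotInvariant T) (hS : M.SlotInvariant S) :
    M.SlotInvariant (T + S) := by
  intro v i j
  simp only [LinearMap.add_apply, M.map_update_add, hT v i j, hS v i j]

theorem SlotInvariant.mul_of_commute (hT : M.SlotInvariant T) (hS : M.SlotInvariant S)
    (hTS : Commute T S) : M.SlotInvariant (T * S) := by
  intro v i j
  rcases eq_or_ne i j with rfl | hij
  · rfl
  calc M (update v i ((T * S) (v i)))
      = M (update (update v i (S (v i))) j (T (v j))) := by
        simpa [update_idem, update_self, update_of_ne hij.symm] using
          hT (update v i (S (v i))) i j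
    _ = M (update (update v j (T (v j))) j (S (T (v j)))) := by
        simpa [update_comm hij.symm, update_self, update_of_ne hij] using
          hS (update v j (T (v j))) i j
    _ = M (update v j ((T * S) (v j))) := by
        rw [update_idem, Module.End.mul_apply, ← Module.End.mul_apply, ← hTS.eq]
        rfl

theorem SlotInvariant.aeval (hT : M.SlotInvariant T) (p : R[X]) :
    M.SlotInvariant (aeval T p) := by
  induction p using Polynomial.induction_on with
  | C a => simpa only [aeval_C] using slotInvariant_algebraMap a
  | add p q hp hq => simpa only [map_add] using hp.add hq
  | monomial n a h =>
    have hcomm := ((commute_X (C a * X ^ n)).map (Polynomial.aeval T)).symm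
    rw [aeval_X] at hcomm
    rw [pow_succ, ← mul_assoc, map_mul, aeval_X]
    exact h.mul_of_commute hT hcomm

theorem SlotInvariant.map_eq_zero (hT : M.SlotInvariant T) {v : ι → V} {i j : ι} (hij : i ≠ j)
    (hi : T (v i) = 0) (hj : v j ∈ LinearMap.range T) : M v = 0 := by
  obtain ⟨z, hz⟩ := hj
  calc M v = M (update (update v j z) j (T (update v j z j))) := by simp [hz]
    _ = M (update (update v j z) i (T (update v j z i))) := hT _ j i
    _ = 0 := by simp [update_of_ne hij, hi]

end MultilinearMap

theorem LinearMap.IsAdjointPair.aeval_self {R M N : Type*} [CommRing R] [AddCommGroup M]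
    [Module R M] [AddCommGroup N] [Module R N] {B : M →ₗ[R] M →ₗ[R] N} {T : Module.End R M}
    (hT : B.IsAdjointPair B T T) (p : R[X]) : B.IsAdjointPair B (aeval T p) (aeval T p) := by
  induction p using Polynomial.induction_on with
  | C a => intro x y; simp
  | add p q hp hq => intro x y; simp [hp x y, hq x y]
  | monomial n a h =>
    have hcomm := ((commute_X (C a * X ^ n)).map (Polynomial.aeval T)).symm
    rw [aeval_X] at hcomm
    rw [pow_succ, ← mul_assoc, map_mul]
    simpa only [aeval_X, hcomm.eq] using h.mul hT

theorem Polynomial.ker_aeval_le_range_aeval_of_isCoprime {R M : Type*} [CommRing R]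
    [AddCommGroup M] [Module R M] (T : Module.End R M) {f g : R[X]} (hfg : IsCoprime f g) :
    LinearMap.ker (aeval T g) ≤ LinearMap.range (aeval T f) := by
  intro y hy
  obtain ⟨u, w, huw⟩ := hfg
  refine ⟨aeval T u y, ?_⟩
  simpa [mul_comm u f, LinearMap.mem_ker.1 hy] using congr_arg (fun q => aeval T q y) huw

theorem Module.End.eq_zero_of_mul_eq_zero_of_ker_eq_bot {R M : Type*} [CommRing R]
    [AddCommGroup M] [Module R M] {U W : Module.End R M} (hU : LinearMap.ker U = ⊥)
    (hUW : U * W = 0) : W = 0 :=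
  LinearMap.ext fun x => LinearMap.ker_eq_bot'.1 hU _ (by rw [← Module.End.mul_apply, hUW]; rfl)

theorem Module.End.exists_associated_pow_irreducible_minpoly {K V : Type*} [Field K]
    [AddCommGroup V] [Module K V] [FiniteDimensional K V] [Nontrivial V] (T : Module.End K V)
    (h : ∀ f g : K[X], IsCoprime f g → aeval T (f * g) = 0 →
      LinearMap.ker (aeval T f) = ⊥ ∨ LinearMap.ker (aeval T g) = ⊥) :
    ∃ p : K[X], Irreducible p ∧ ∃ k ≠ 0, Associated (p ^ k) (minpoly K T) := by
  have hm0 : minpoly K T ≠ 0 := minpoly.ne_zero (Algebra.IsIntegral.isIntegral T)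
  obtain ⟨p, hp, hpm⟩ := WfDvdMonoid.exists_irreducible_factor (minpoly.not_isUnit K T) hm0
  obtain ⟨g, hfac, hpg⟩ :=
    (FiniteMultiplicity.of_not_isUnit hp.not_isUnit hm0).exists_eq_pow_mul_and_not_dvd
  set k := multiplicity p (minpoly K T)
  have h0 : aeval T (p ^ k * g) = 0 := by rw [← hfac, minpoly.aeval]
  rcases h _ _ (hp.coprime_pow_of_not_dvd k hpg).symm h0 with hker | hker
  · have hg0 : aeval T g = 0 := eq_zero_of_mul_eq_zero_of_ker_eq_bot hker (by rw [← map_mul, h0])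
    exact absurd (hpm.trans (minpoly.dvd K T hg0)) hpg
  · have hpk0 : aeval T (p ^ k) = 0 :=
      eq_zero_of_mul_eq_zero_of_ker_eq_bot hker (by rw [← map_mul, mul_comm, h0])
    have hdvd : minpoly K T ∣ p ^ k := minpoly.dvd K T hpk0
    refine ⟨p, hp, k, ?_, associated_of_dvd_dvd ⟨g, hfac⟩ hdvd⟩
    rintro hk
    rw [hk, pow_zero] at hdvd
    exact minpoly.not_isUnit K T (isUnit_of_dvd_one hdvd)

theorem Module.End.spectrum_baseChange {K L V : Type*} [Field K] [Field L] [Algebra K L]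
    [AddCommGroup V] [Module K V] [FiniteDimensional K V] (T : Module.End K V) :
    spectrum L (T.baseChange L) = (minpoly K T).rootSet L := by
  ext μ
  rw [mem_rootSet_of_ne (minpoly.ne_zero (Algebra.IsIntegral.isIntegral T))]
  constructor
  · intro hμ
    have hroot : (minpoly L (T.baseChange L)).IsRoot μ :=
      hasEigenvalue_iff_isRoot.1 (HasEigenvalue.of_mem_spectrum hμ)
    have hdvd : minpoly L (T.baseChange L) ∣ (minpoly K T).map (algebraMap K L) := by
      refine minpoly.dvd _ _ ?_
      rw [aeval_map_algebraMap]
      exact (aeval_algHom_apply (baseChangeHom K L V) T _).trans (by rw [minpoly.aeval, map_zero])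
    simpa [IsRoot, eval_map_algebraMap] using hroot.dvd hdvd
  · intro hμ
    obtain ⟨q, hq⟩ := LinearMap.minpoly_dvd_charpoly T
    rw [mem_spectrum_iff_isRoot_charpoly, LinearMap.charpoly_baseChange, IsRoot,
      eval_map_algebraMap, hq, map_mul, hμ, zero_mul]

theorem Polynomial.rootSet_eq_of_associated_pow {R S : Type*} [CommRing R] [IsDomain R]
    [CommRing S] [IsDomain S] [Algebra R S] [Module.IsTorsionFree R S] {p q : R[X]} {k : ℕ}
    (hk : k ≠ 0) (h : Associated (p ^ k) q) : q.rootSet S = p.rootSet S := by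
  obtain ⟨u, rfl⟩ := h
  ext μ
  have hu : aeval μ (u : R[X]) ≠ 0 := (u.isUnit.map (aeval μ)).ne_zero
  simp [mem_rootSet, hk, hu]

theorem Complex.pair_self_conj_eq (z : ℂ) :
    ({z, (starRingEnd ℂ) z} : Set ℂ) = {z.re + |z.im| * I, z.re - |z.im| * I} := by
  rcases le_or_gt 0 z.im with him | him
  · rw [abs_of_nonneg him]
    congr 1 <;> [skip; congr 1] <;> apply Complex.ext <;> simp
  · rw [abs_of_neg him, Set.pair_comm]
    congr 1 <;> [skip; congr 1] <;> apply Complex.ext <;> simp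

theorem Irreducible.rootSet_complex_eq_singleton_or_pair {p : ℝ[X]} (hp : Irreducible p) :
    (∃ a₁ : ℝ, p.rootSet ℂ = {(a₁ : ℂ)}) ∨
    (∃ a₁ a₂ : ℝ, 0 < a₂ ∧
      p.rootSet ℂ = {(a₁ : ℂ) + a₂ * Complex.I, (a₁ : ℂ) - a₂ * Complex.I}) := by
  obtain ⟨μ, hμ⟩ := IsAlgClosed.exists_aeval_eq_zero ℂ p (degree_pos_of_irreducible hp).ne'
  have hmem : ∀ {z : ℂ}, aeval z p = 0 → z ∈ p.rootSet ℂ := (mem_rootSet_of_ne hp.ne_zero).2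
  have hcard := ncard_rootSet_le p ℂ
  rcases eq_or_ne μ.im 0 with him | him
  · have hreal : (μ.re : ℂ) = μ := Complex.ext rfl him.symm
    have hdeg : p.natDegree = 1 := by
      refine natDegree_eq_of_degree_eq_some (degree_eq_one_of_irreducible_of_root hp (x := μ.re) ?_)
      rw [← hreal, ← Complex.coe_algebraMap, aeval_algebraMap_apply,
        map_eq_zero_iff _ (algebraMap ℝ ℂ).injective] at hμ
      simpa using hμ
    refine Or.inl ⟨μ.re, (Set.eq_of_subset_of_ncard_le ?_ ?_ (rootSet_finite p ℂ)).symm⟩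
    · simpa [hreal] using hmem hμ
    · simpa [hdeg] using hcard
  · have hconj : aeval ((starRingEnd ℂ) μ) p = 0 := by rw [aeval_conj, hμ, map_zero]
    have hne : μ ≠ (starRingEnd ℂ) μ := fun h => him (Complex.conj_eq_iff_im.1 h.symm)
    refine Or.inr ⟨μ.re, |μ.im|, abs_pos.2 him, ?_⟩
    rw [← Complex.pair_self_conj_eq]
    refine (Set.eq_of_subset_of_ncard_le ?_ ?_ (rootSet_finite p ℂ)).symm
    · exact Set.insert_subset (hmem hμ) (Set.singleton_subset_iff.2 (hmem hconj))
    · rw [Set.ncard_pair hne]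
      exact hcard.trans hp.natDegree_le_two

@[simps]
def IsML.toMultilinearMap {W : Type*} [AddCommGroup W] [Module ℝ W]
    {f : W → W → W → W → ℝ} (hf : IsML f) : MultilinearMap ℝ (fun _ : Fin 4 => W) ℝ where
  toFun v := f (v 0) (v 1) (v 2) (v 3)
  map_update_add' v i x y := by
    obtain ⟨h1, -, h2, -, h3, -, h4, -⟩ := hf
    fin_cases i <;> simp [h1, h2, h3, h4, update_of_ne, Fin.ext_iff]
  map_update_smul' v i c x := by
    obtain ⟨-, h1, -, h2, -, h3, -, h4⟩ := hf
    fin_cases i <;> simp [h1, h2, h3, h4, update_of_ne, Fin.ext_iff]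

theorem ricciForm_comm {V : Type*} [AddCommGroup V] [Module ℝ V]
    (R : V →ₗ[ℝ] V →ₗ[ℝ] V →ₗ[ℝ] V) (x y : V) : ricciForm R x y = ricciForm R y x := by
  rw [ricciForm, ricciForm, add_comm]

theorem isAdjointPair_of_ricciForm {V : Type*} [AddCommGroup V] [Module ℝ V]
    {B : LinearMap.BilinForm ℝ V} (hB : ∀ x y, B x y = B y x)
    {R : V →ₗ[ℝ] V →ₗ[ℝ] V →ₗ[ℝ] V} {ρ : V →ₗ[ℝ] V} (hρ : ∀ x y, B (ρ x) y = ricciForm R x y) :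
    B.IsAdjointPair B ρ ρ := fun x y => by
  rw [hρ, ricciForm_comm, ← hρ, hB]

theorem JRComm.slotInvariant {V : Type*} [AddCommGroup V] [Module ℝ V]
    {A : V → V → V → V → ℝ} {ρ : V →ₗ[ℝ] V} (hJR : JRComm A ρ) (hA : IsML A) :
    hA.toMultilinearMap.SlotInvariant ρ := by
  suffices h : ∀ v i, hA.toMultilinearMap (update v i (ρ (v i))) = A (ρ (v 0)) (v 1) (v 2) (v 3)
  · intro v i j
    rw [h, h]
  intro v i
  obtain ⟨h01, h12, h23⟩ := hJR (v 0) (v 1) (v 2) (v 3)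
  fin_cases i <;> simp [update_of_ne, Fin.ext_iff, h01, h12, h23]

theorem ker_aeval_eq_bot_or_of_not_decomposable {V : Type*} [AddCommGroup V] [Module ℝ V]
    {B : LinearMap.BilinForm ℝ V} {A : V → V → V → V → ℝ} (hA : IsML A) {ρ : V →ₗ[ℝ] V}
    (hB : B.IsAdjointPair B ρ ρ) (hAρ : hA.toMultilinearMap.SlotInvariant ρ)
    (hind : ¬ Decomposable B A) {f g : ℝ[X]} (hfg : IsCoprime f g)
    (hfg0 : aeval ρ (f * g) = 0) :
    LinearMap.ker (aeval ρ f) = ⊥ ∨ LinearMap.ker (aeval ρ g) = ⊥ := by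
  by_contra! hne
  have hrange := ker_aeval_le_range_aeval_of_isCoprime ρ hfg
  refine hind ⟨_, _, hne.1, hne.2, ⟨disjoint_ker_aeval_of_isCoprime ρ hfg, ?_⟩, ?_, ?_⟩
  · rw [codisjoint_iff, sup_ker_aeval_eq_ker_aeval_mul_of_coprime ρ hfg, hfg0, LinearMap.ker_zero]
  · rintro x hx y hy
    obtain ⟨z, rfl⟩ := hrange hy
    rw [← hB.aeval_self f, LinearMap.mem_ker.1 hx, map_zero, LinearMap.zero_apply]
  · intro v i j hij hi hj
    exact (hAρ.aeval f).map_eq_zero hij hi (hrange hj)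

theorem statement2_general
    {V : Type*} [AddCommGroup V] [Module ℝ V] [FiniteDimensional ℝ V] [Nontrivial V]
    (B : LinearMap.BilinForm ℝ V)
    (hBsymm : ∀ x y, B x y = B y x)
    (A : V → V → V → V → ℝ) (hA : IsACT A)
    (R : V →ₗ[ℝ] V →ₗ[ℝ] V →ₗ[ℝ] V)
    (ρ : V →ₗ[ℝ] V)
    (hρ : ∀ x y, B (ρ x) y = ricciForm R x y)
    (hJR : JRComm A ρ)
    (hind : ¬ Decomposable B A) :
    (∃ a₁ : ℝ, spectrum ℂ (LinearMap.baseChange ℂ ρ) = {(a₁ : ℂ)}) ∨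
    (∃ a₁ a₂ : ℝ, 0 < a₂ ∧
      spectrum ℂ (LinearMap.baseChange ℂ ρ) =
        {(a₁ : ℂ) + (a₂ : ℂ) * Complex.I, (a₁ : ℂ) - (a₂ : ℂ) * Complex.I}) := by
  have hρB := isAdjointPair_of_ricciForm hBsymm hρ
  obtain ⟨p, hp, k, hk, hpk⟩ := Module.End.exists_associated_pow_irreducible_minpoly ρ
    fun f g hfg hfg0 =>
      ker_aeval_eq_bot_or_of_not_decomposable hA.1 hρB (hJR.slotInvariant hA.1) hind hfg hfg0
  rw [Module.End.spectrum_baseChange, rootSet_eq_of_associated_pow hk hpk]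
  exact hp.rootSet_complex_eq_singleton_or_pair

theorem statement2
    {V : Type*} [AddCommGroup V] [Module ℝ V] [FiniteDimensional ℝ V] [Nontrivial V]
    (B : LinearMap.BilinForm ℝ V)
    (hBsymm : ∀ x y, B x y = B y x)
    (hBnondeg : ∀ x, (∀ y, B x y = 0) → x = 0)
    (A : V → V → V → V → ℝ) (hA : IsACT A)
    (R : V →ₗ[ℝ] V →ₗ[ℝ] V →ₗ[ℝ] V)
    (hR : ∀ x y z w, B (R x y z) w = A x y z w)
    (ρ : V →ₗ[ℝ] V)
    (hρ : ∀ x y, B (ρ x) y = ricciForm R x y)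
    (hJR : JRComm A ρ)
    (hind : ¬ Decomposable B A) :
    (∃ a₁ : ℝ, spectrum ℂ (LinearMap.baseChange ℂ ρ) = {(a₁ : ℂ)}) ∨
    (∃ a₁ a₂ : ℝ, 0 < a₂ ∧
      spectrum ℂ (LinearMap.baseChange ℂ ρ) =
        {(a₁ : ℂ) + (a₂ : ℂ) * Complex.I, (a₁ : ℂ) - (a₂ : ℂ) * Complex.I}) :=
  statement2_general B hBsymm A hA R ρ hρ hJR hind
end

section
/- Let ⟨·,·⟩ be a nondegenerate symmetric bilinear form on a finite-dimensional real vector space V and let J : V → V be a linear map which is self-adjoint (⟨Jx, y⟩ = ⟨x, Jy⟩ for all x, y) and satisfies J² = −id. Then dim V is even, say dim V = 2p, and there exists a basis e₁⁺, e₁⁻, …, e_p⁺, e_p⁻ of V such that ⟨e_i⁺, e_j⁺⟩ = δ_ij, ⟨e_i⁻, e_j⁻⟩ = −δ_ij, ⟨e_i⁺, e_j⁻⟩ = 0, J e_i⁺ = e_i⁻, and J e_i⁻ = −e_i⁺ for all i, j. -/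
/-!
`J` turns `V` into a complex vector space with `i` acting as `J`. Self-adjointness and `J² = -1`
give `B (J x) (J y) = -B x y`, which is exactly what makes `C x y = B x y - i B (J x) y`
complex bilinear; it is symmetric, nondegenerate and has real part `B`. Over `ℂ` every such form
has an orthonormal basis `fᵢ` (orthogonalize, then rescale by square roots), and `fᵢ, J fᵢ` is
the required real basis: the real and imaginary parts of `C fᵢ fⱼ = δᵢⱼ` are the relations.
-/

open TensorProduct

open Complex Module

namespace LinearMap.BilinForm

variable {K M : Type*} [Field K] [IsAlgClosed K] [Invertible (2 : K)] [AddCommGroup M] [Module K M]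
  [FiniteDimensional K M]

theorem exists_orthonormal_basis_of_isAlgClosed {B : LinearMap.BilinForm K M} (hs : B.IsSymm)
    (hB : B.SeparatingLeft) :
    ∃ f : Basis (Fin (finrank K M)) K M, ∀ i j, B (f i) (f j) = if i = j then 1 else 0 := by
  obtain ⟨v, hv⟩ := exists_orthogonal_basis (isSymm_iff.mp hs)
  have hvv i : B (v i) (v i) ≠ 0 := hv.not_isOrtho_basis_self_of_separatingLeft hB i
  choose s hsq using fun i => IsAlgClosed.exists_eq_mul_self (B (v i) (v i))
  have hs0 i : s i ≠ 0 := fun h => hvv i (by rw [hsq i, h, mul_zero])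
  refine ⟨v.unitsSMul fun i => (Units.mk0 (s i) (hs0 i))⁻¹, fun i j => ?_⟩
  simp only [Basis.unitsSMul_apply, Units.smul_def, Units.val_inv_eq_inv_val, Units.val_mk0,
    map_smul, LinearMap.smul_apply, smul_eq_mul]
  split_ifs with hij
  · subst hij
    rw [hsq i]
    field_simp [hs0 i]
  · rw [hv hij, mul_zero, mul_zero]

end LinearMap.BilinForm

namespace Module.Basis

variable {ι V : Type*} [AddCommGroup V] [Module ℂ V] [Module ℝ V] [IsScalarTower ℝ ℂ V]

noncomputable def complexToReal (f : Basis ι ℂ V) : Basis (ι ⊕ ι) ℝ V :=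
  (basisOneI.smulTower f).reindex
    ((finTwoEquiv.prodCongr (Equiv.refl ι)).trans (Equiv.boolProdEquivSum ι))

variable (f : Basis ι ℂ V)

@[simp]
lemma complexToReal_inl (i : ι) : f.complexToReal (.inl i) = f i := by
  simp [complexToReal, smulTower_apply, finTwoEquiv]

@[simp]
lemma complexToReal_inr (i : ι) : f.complexToReal (.inr i) = I • f i := by
  simp [complexToReal, smulTower_apply, finTwoEquiv]

end Module.Basis

section ComplexModule

variable {V : Type*} [AddCommGroup V] [Module ℂ V]

lemma Complex.I_smul_I_smul (x : V) : I • I • x = -x := by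
  rw [smul_smul, I_mul_I, neg_one_smul]

variable [Module ℝ V] [IsScalarTower ℝ ℂ V]

lemma Complex.smul_eq_re_smul_add_im_smul_I_smul (c : ℂ) (x : V) :
    c • x = c.re • x + c.im • I • x := by
  conv_lhs => rw [← re_add_im c]
  rw [add_smul, mul_smul, RCLike.real_smul_eq_coe_smul (K := ℂ),
    RCLike.real_smul_eq_coe_smul (K := ℂ)]
  rfl

end ComplexModule

namespace Module.End

variable {V : Type*} [AddCommGroup V] [Module ℝ V] (J : Module.End ℝ V) (hJ : J * J = -1)

abbrev complexModule : Module ℂ V :=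
  Module.compHom V (Complex.lift ⟨J, hJ⟩).toRingHom

lemma complexModule_smul (c : ℂ) (v : V) :
    letI := J.complexModule hJ
    c • v = c.re • v + c.im • J v := by
  show (Complex.lift ⟨J, hJ⟩ c) v = _
  simp [Algebra.algebraMap_eq_smul_one]

lemma isScalarTower_complexModule :
    letI := J.complexModule hJ
    IsScalarTower ℝ ℂ V :=
  letI := J.complexModule hJ
  .of_algebraMap_smul fun r v => by simp [complexModule_smul]

lemma I_smul_complexModule (v : V) :
    letI := J.complexModule hJ
    I • v = J v := by
  simp [complexModule_smul]

end Module.End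

namespace LinearMap.BilinForm

variable {V : Type*} [AddCommGroup V] [Module ℝ V] [Module ℂ V] [IsScalarTower ℝ ℂ V]

section

variable (B : LinearMap.BilinForm ℝ V) (hI : ∀ x y, B (I • x) y = B x (I • y))

noncomputable def toComplexBilin : LinearMap.BilinForm ℂ V :=
  LinearMap.mk₂ ℂ (fun x y => (B x y : ℂ) - B (I • x) y * I)
    (fun x x' y => by simp only [smul_add, map_add, LinearMap.add_apply]; push_cast; ring)
    (fun c x y => by
      rw [smul_eq_re_smul_add_im_smul_I_smul c x]
      simp only [smul_add, smul_comm I c.re, smul_comm I c.im, I_smul_I_smul, smul_neg,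
        map_add, map_smul, map_neg, LinearMap.add_apply, LinearMap.smul_apply, LinearMap.neg_apply,
        smul_eq_mul]
      apply Complex.ext <;> simp; ring)
    (fun x y y' => by simp only [map_add]; push_cast; ring)
    (fun c x y => by
      rw [smul_eq_re_smul_add_im_smul_I_smul c y]
      simp only [map_add, map_smul, ← hI, I_smul_I_smul, map_neg, LinearMap.neg_apply,
        smul_eq_mul]
      apply Complex.ext <;> simp; ring)

@[simp]
lemma toComplexBilin_apply (x y : V) : B.toComplexBilin hI x y = B x y - B (I • x) y * I := rfl

lemma isSymm_toComplexBilin (hs : B.IsSymm) : (B.toComplexBilin hI).IsSymm :=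
  ⟨fun x y => by
    rw [toComplexBilin_apply, toComplexBilin_apply, hI, hI, hs.eq x y, hs.eq x (I • y), hI]⟩

lemma separatingLeft_toComplexBilin (hnd : B.SeparatingLeft) :
    (B.toComplexBilin hI).SeparatingLeft :=
  fun x hx => hnd x fun y => by simpa using congrArg re (hx y)

end

theorem exists_basis_of_selfAdjoint_I [FiniteDimensional ℂ V] {B : LinearMap.BilinForm ℝ V}
    (hs : B.IsSymm) (hnd : B.SeparatingLeft) (hI : ∀ x y, B (I • x) y = B x (I • y)) :
    ∃ b : Basis (Fin (finrank ℂ V) ⊕ Fin (finrank ℂ V)) ℝ V,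
      (∀ i j, B (b (.inl i)) (b (.inl j)) = if i = j then 1 else 0) ∧
      (∀ i j, B (b (.inr i)) (b (.inr j)) = if i = j then -1 else 0) ∧
      (∀ i j, B (b (.inl i)) (b (.inr j)) = 0) ∧
      (∀ i, b (.inr i) = I • b (.inl i)) := by
  obtain ⟨f, hf⟩ := exists_orthonormal_basis_of_isAlgClosed (isSymm_toComplexBilin B hI hs)
    (separatingLeft_toComplexBilin B hI hnd)
  have hre i j : B (f i) (f j) = if i = j then 1 else 0 := by
    simpa [apply_ite re] using congrArg re (hf i j)
  have him i j : B (I • f i) (f j) = 0 := by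
    simpa [apply_ite im] using congrArg im (hf i j)
  refine ⟨f.complexToReal, fun i j => by simpa using hre i j, fun i j => ?_, fun i j => ?_,
    fun i => by simp⟩
  · rw [Basis.complexToReal_inr, Basis.complexToReal_inr, hI, I_smul_I_smul, map_neg, hre]
    split_ifs <;> simp
  · rw [Basis.complexToReal_inl, Basis.complexToReal_inr, ← hI, him]

end LinearMap.BilinForm

theorem statement10
    {V : Type*} [AddCommGroup V] [Module ℝ V] [FiniteDimensional ℝ V]
    (B : LinearMap.BilinForm ℝ V)
    (hBsymm : ∀ x y, B x y = B y x)
    (hBnondeg : ∀ x, (∀ y, B x y = 0) → x = 0)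
    (J : V →ₗ[ℝ] V)
    (hJsa : ∀ x y, B (J x) y = B x (J y))
    (hJ2 : J ∘ₗ J = - LinearMap.id) :
    ∃ p : ℕ, Module.finrank ℝ V = 2 * p ∧
      ∃ b : Module.Basis (Fin p ⊕ Fin p) ℝ V,
        (∀ i j, B (b (Sum.inl i)) (b (Sum.inl j)) = if i = j then 1 else 0) ∧
        (∀ i j, B (b (Sum.inr i)) (b (Sum.inr j)) = if i = j then -1 else 0) ∧
        (∀ i j, B (b (Sum.inl i)) (b (Sum.inr j)) = 0) ∧
        (∀ i, J (b (Sum.inl i)) = b (Sum.inr i)) ∧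
        (∀ i, J (b (Sum.inr i)) = - b (Sum.inl i)) := by
  let := Module.End.complexModule J hJ2
  have := Module.End.isScalarTower_complexModule J hJ2
  have : FiniteDimensional ℂ V := .of_restrictScalars_finite ℝ ℂ V
  have hJ : ∀ v, J v = I • v := fun v => (Module.End.I_smul_complexModule J hJ2 v).symm
  obtain ⟨b, hll, hrr, hlr, hrl⟩ :=
    LinearMap.BilinForm.exists_basis_of_selfAdjoint_I ⟨hBsymm⟩ hBnondeg
      (by simpa only [hJ] using hJsa)
  refine ⟨finrank ℂ V, ?_, b, hll, hrr, hlr, fun i => by rw [hJ, hrl], fun i => ?_⟩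
  · rw [← finrank_mul_finrank ℝ ℂ V, Complex.finrank_real_complex]
  · rw [hJ, hrl, I_smul_I_smul]
end
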